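/- Let F be a field of characteristic different from 2 and n ≥ 2. Let P(n) denote the subspace of M_{2n}(F) consisting of block matrices [[A, B], [C, Aᵀ]] with A, B, C ∈ M_n(F), Bᵀ = −B, and Cᵀ = C. Grade P(n) with even part the block-diagonal matrices (B = 0, C = 0) and odd part the block-off-diagonal matrices (A = 0), and equip it with the super-symmetrized product: for x = x₀ + x₁ and y = y₀ + y₁ decomposed into even and odd parts, x∘y is bilinear with x₀∘y₀ = (1/2)(x₀y₀ + y₀x₀), x₀∘y₁ = (1/2)(x₀y₁ + y₁x₀), x₁∘y₀ = (1/2)(x₁y₀ + y₀x₁), and x₁∘y₁ = (1/2)(x₁y₁ − y₁x₁). Then every 1/2-derivation φ of P(n) is of the form φ(x) = α·x for some α ∈ F. -/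

import Mathlib

/-- The even (block-diagonal) part of a matrix indexed by `α ⊕ β`. -/
def blockDiagPart {F : Type*} [Field F] {α β : Type*}
    (x : Matrix (α ⊕ β) (α ⊕ β) F) : Matrix (α ⊕ β) (α ⊕ β) F :=
  Matrix.of fun i j => if i.isLeft = j.isLeft then x i j else 0

/-- The super-symmetrized product `∘` on block matrices: writing
`x = x₀ + x₁` with `x₀` the block-diagonal (even) part and `x₁` the
block-off-diagonal (odd) part, `x ∘ y` is bilinear with
`x₀∘y₀ = (1/2)(x₀y₀ + y₀x₀)`, `x₀∘y₁ = (1/2)(x₀y₁ + y₁x₀)`,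
`x₁∘y₀ = (1/2)(x₁y₀ + y₀x₁)` and `x₁∘y₁ = (1/2)(x₁y₁ − y₁x₁)`. -/
def superMul {F : Type*} [Field F] {α β : Type*} [Fintype α] [Fintype β]
    (x y : Matrix (α ⊕ β) (α ⊕ β) F) : Matrix (α ⊕ β) (α ⊕ β) F :=
  (1 / 2 : F) •
    (blockDiagPart x * blockDiagPart y + blockDiagPart y * blockDiagPart x
      + blockDiagPart x * (y - blockDiagPart y) + (y - blockDiagPart y) * blockDiagPart x
      + (x - blockDiagPart x) * blockDiagPart y + blockDiagPart y * (x - blockDiagPart x)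
      + (x - blockDiagPart x) * (y - blockDiagPart y)
      - (y - blockDiagPart y) * (x - blockDiagPart x))

/-- The subspace `P(n)` of `M_{2n}(F)`: block matrices `[[A, B], [C, Aᵀ]]`
with `Bᵀ = −B` and `Cᵀ = C`. -/
def PnSub (F : Type*) [Field F] (n : ℕ) :
    Submodule F (Matrix (Fin n ⊕ Fin n) (Fin n ⊕ Fin n) F) where
  carrier := {x | x.toBlocks₂₂ = x.toBlocks₁₁.transpose
    ∧ x.toBlocks₁₂.transpose = - x.toBlocks₁₂
    ∧ x.toBlocks₂₁.transpose = x.toBlocks₂₁}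
  add_mem' := by
    rintro a b ⟨ha1, ha2, ha3⟩ ⟨hb1, hb2, hb3⟩
    refine ⟨?_, ?_, ?_⟩
    · show a.toBlocks₂₂ + b.toBlocks₂₂ = (a.toBlocks₁₁ + b.toBlocks₁₁).transpose
      rw [Matrix.transpose_add, ha1, hb1]
    · show (a.toBlocks₁₂ + b.toBlocks₁₂).transpose = -(a.toBlocks₁₂ + b.toBlocks₁₂)
      rw [Matrix.transpose_add, ha2, hb2, neg_add]
    · show (a.toBlocks₂₁ + b.toBlocks₂₁).transpose = a.toBlocks₂₁ + b.toBlocks₂₁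
      rw [Matrix.transpose_add, ha3, hb3]
  zero_mem' := by
    refine ⟨?_, ?_, ?_⟩
    · show (0 : Matrix (Fin n) (Fin n) F) = (0 : Matrix (Fin n) (Fin n) F).transpose
      simp
    · show (0 : Matrix (Fin n) (Fin n) F).transpose = -(0 : Matrix (Fin n) (Fin n) F)
      simp
    · show (0 : Matrix (Fin n) (Fin n) F).transpose = 0
      simp
  smul_mem' := by
    rintro c x ⟨h1, h2, h3⟩
    refine ⟨?_, ?_, ?_⟩
    · show c • x.toBlocks₂₂ = (c • x.toBlocks₁₁).transpose
      rw [Matrix.transpose_smul, h1]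
    · show (c • x.toBlocks₁₂).transpose = -(c • x.toBlocks₁₂)
      rw [Matrix.transpose_smul, h2, smul_neg]
    · show (c • x.toBlocks₂₁).transpose = c • x.toBlocks₂₁
      rw [Matrix.transpose_smul, h3]

open Matrix

/-!
Since `1 ∈ P(n)` is a unit for `∘`, the `1/2`-derivation identity at `(1, x)` and `(x, 1)` gives
`φ x = d ∘ x = x ∘ d` with `d = φ 1`. Super-commuting with the odd elements `[[0, 0], [1, 0]]`
and `[[0, E_ij - E_ji], [0, 0]]` kills the odd part of `d`, so `d = diag(A, Aᵀ)`. The identity at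
`([[0, S], [0, 0]], [[0, 0], [1, 0]])` then reads `AS + SA = 2SAᵀ`; for `S = E_ij - E_ji` its
`(i, i)` and `(i, j)` entries give `A_ji = 3A_ij` and `A_ii = A_jj`, so `A` is scalar when
`char F ≠ 2`, and `φ = d ∘ -` is a multiple of the identity.
-/

section SuperMul

variable {F : Type*} [Field F] {α β : Type*}

lemma blockDiagPart_fromBlocks (A : Matrix α α F) (B : Matrix α β F) (C : Matrix β α F)
    (D : Matrix β β F) : blockDiagPart (fromBlocks A B C D) = fromBlocks A 0 0 D := by
  ext (i | i) (j | j) <;> simp [blockDiagPart]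

lemma blockDiagPart_smul (c : F) (x : Matrix (α ⊕ β) (α ⊕ β) F) :
    blockDiagPart (c • x) = c • blockDiagPart x := by
  ext i j
  by_cases h : i.isLeft = j.isLeft <;> simp [blockDiagPart, h]

lemma blockDiagPart_one [DecidableEq α] [DecidableEq β] :
    blockDiagPart (1 : Matrix (α ⊕ β) (α ⊕ β) F) = 1 := by
  rw [← fromBlocks_one, blockDiagPart_fromBlocks]

variable [Fintype α] [Fintype β]

lemma superMul_fromBlocks (A A' : Matrix α α F) (B B' : Matrix α β F) (C C' : Matrix β α F)
    (D D' : Matrix β β F) :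
    superMul (fromBlocks A B C D) (fromBlocks A' B' C' D') =
      (1 / 2 : F) • fromBlocks
        (A * A' + A' * A + B * C' - B' * C) (A * B' + B' * D + B * D' + A' * B)
        (D * C' + C' * A + C * A' + D' * C) (D * D' + D' * D + C * B' - C' * B) := by
  simp only [superMul, blockDiagPart_fromBlocks, sub_eq_add_neg, fromBlocks_neg,
    fromBlocks_add, fromBlocks_multiply]
  congr 2 <;> simp only [add_neg_cancel, neg_zero, add_zero, Matrix.mul_zero, Matrix.zero_mul,
    zero_add]

lemma superMul_smul_left (c : F) (x y : Matrix (α ⊕ β) (α ⊕ β) F) :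
    superMul (c • x) y = c • superMul x y := by
  simp only [superMul, blockDiagPart_smul, ← smul_sub, smul_mul_assoc, mul_smul_comm]
  match_scalars <;> ring

lemma mul_eq_mul_of_superMul_fromBlocks_comm (h2 : (2 : F) ≠ 0) {A A' : Matrix α α F}
    {B B' : Matrix α β F} {C C' : Matrix β α F} {D D' : Matrix β β F}
    (h : superMul (fromBlocks A B C D) (fromBlocks A' B' C' D') =
      superMul (fromBlocks A' B' C' D') (fromBlocks A B C D)) :
    B * C' = B' * C := by
  rw [superMul_fromBlocks, superMul_fromBlocks] at h
  have h₁₁ := (fromBlocks_inj.1 (smul_right_injective _ (one_div_ne_zero h2) h)).1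
  have : (2 : F) • (B * C' - B' * C) = 0 := by linear_combination (norm := module) h₁₁
  exact sub_eq_zero.1 ((smul_eq_zero.1 this).resolve_left h2)

variable [DecidableEq α] [DecidableEq β]

lemma superMul_one_left (h2 : (2 : F) ≠ 0) (x : Matrix (α ⊕ β) (α ⊕ β) F) :
    superMul 1 x = x := by
  simp only [superMul, blockDiagPart_one, one_mul, mul_one, sub_self, zero_mul, mul_zero]
  match_scalars <;> field_simp <;> norm_num

lemma superMul_one_right (h2 : (2 : F) ≠ 0) (x : Matrix (α ⊕ β) (α ⊕ β) F) :
    superMul x 1 = x := by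
  simp only [superMul, blockDiagPart_one, one_mul, mul_one, sub_self, zero_mul, mul_zero]
  match_scalars <;> field_simp <;> norm_num

end SuperMul

lemma eq_of_eq_half_smul_add {F V : Type*} [Field F] [AddCommGroup V] [Module F V]
    (h2 : (2 : F) ≠ 0) {a b : V} (h : a = (1 / 2 : F) • (b + a)) : a = b := by
  have h' := congrArg ((2 : F) • ·) h
  simp only [smul_smul, mul_one_div_cancel h2, one_smul, two_smul] at h'
  exact add_right_cancel h'

section HalfDerivation

variable {F : Type*} [Field F] {α β : Type*} [Fintype α] [Fintype β]

def IsHalfDerivation {V : Submodule F (Matrix (α ⊕ β) (α ⊕ β) F)} (φ : V →ₗ[F] V) :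
    Prop :=
  ∀ x y z : V, (z : Matrix (α ⊕ β) (α ⊕ β) F) = superMul x y →
    (φ z : Matrix (α ⊕ β) (α ⊕ β) F) =
      (1 / 2 : F) • (superMul (φ x) y + superMul x (φ y))

namespace IsHalfDerivation

variable [DecidableEq α] [DecidableEq β] {V : Submodule F (Matrix (α ⊕ β) (α ⊕ β) F)}
  {φ : V →ₗ[F] V} (hφ : IsHalfDerivation φ) (h2 : (2 : F) ≠ 0)
  {h1 : (1 : Matrix (α ⊕ β) (α ⊕ β) F) ∈ V} {d : Matrix (α ⊕ β) (α ⊕ β) F}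
  (hd : (φ ⟨1, h1⟩ : Matrix (α ⊕ β) (α ⊕ β) F) = d)
include hφ h2 hd

lemma coe_apply_eq_superMul_left {x : Matrix (α ⊕ β) (α ⊕ β) F} (hx : x ∈ V) :
    (φ ⟨x, hx⟩ : Matrix (α ⊕ β) (α ⊕ β) F) = superMul d x := by
  have h := hφ ⟨1, h1⟩ ⟨x, hx⟩ ⟨x, hx⟩ (superMul_one_left h2 x).symm
  rw [hd, superMul_one_left h2] at h
  exact eq_of_eq_half_smul_add h2 h

lemma coe_apply_eq_superMul_right {x : Matrix (α ⊕ β) (α ⊕ β) F} (hx : x ∈ V) :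
    (φ ⟨x, hx⟩ : Matrix (α ⊕ β) (α ⊕ β) F) = superMul x d := by
  have h := hφ ⟨x, hx⟩ ⟨1, h1⟩ ⟨x, hx⟩ (superMul_one_right h2 x).symm
  rw [hd, superMul_one_right h2, add_comm] at h
  exact eq_of_eq_half_smul_add h2 h

lemma superMul_comm {x : Matrix (α ⊕ β) (α ⊕ β) F} (hx : x ∈ V) :
    superMul d x = superMul x d :=
  (hφ.coe_apply_eq_superMul_left h2 hd hx).symm.trans (hφ.coe_apply_eq_superMul_right h2 hd hx)

lemma superMul_superMul {x y : Matrix (α ⊕ β) (α ⊕ β) F} (hx : x ∈ V) (hy : y ∈ V)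
    (hxy : superMul x y ∈ V) :
    superMul d (superMul x y) =
      (1 / 2 : F) • (superMul (superMul d x) y + superMul x (superMul d y)) := by
  have h := hφ ⟨x, hx⟩ ⟨y, hy⟩ ⟨_, hxy⟩ rfl
  rwa [hφ.coe_apply_eq_superMul_left h2 hd hx, hφ.coe_apply_eq_superMul_left h2 hd hy,
    hφ.coe_apply_eq_superMul_left h2 hd hxy] at h

end IsHalfDerivation

end HalfDerivation

section Pn

variable {F : Type*} [Field F] {n : ℕ}

lemma fromBlocks_mem_PnSub_iff {A B C D : Matrix (Fin n) (Fin n) F} :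
    fromBlocks A B C D ∈ PnSub F n ↔ D = Aᵀ ∧ Bᵀ = -B ∧ Cᵀ = C :=
  Iff.rfl

lemma mem_PnSub_iff {x : Matrix (Fin n ⊕ Fin n) (Fin n ⊕ Fin n) F} :
    x ∈ PnSub F n ↔ ∃ A B C, Bᵀ = -B ∧ Cᵀ = C ∧ x = fromBlocks A B C Aᵀ := by
  constructor
  · rintro ⟨hD, hB, hC⟩
    exact ⟨_, _, _, hB, hC, by rw [← hD, fromBlocks_toBlocks]⟩
  · rintro ⟨A, B, C, hB, hC, rfl⟩
    exact fromBlocks_mem_PnSub_iff.2 ⟨rfl, hB, hC⟩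

lemma one_mem_PnSub : (1 : Matrix (Fin n ⊕ Fin n) (Fin n ⊕ Fin n) F) ∈ PnSub F n := by
  rw [← fromBlocks_one, fromBlocks_mem_PnSub_iff]
  simp

lemma superMul_mem_PnSub {x y : Matrix (Fin n ⊕ Fin n) (Fin n ⊕ Fin n) F}
    (hx : x ∈ PnSub F n) (hy : y ∈ PnSub F n) : superMul x y ∈ PnSub F n := by
  obtain ⟨A, B, C, hB, hC, rfl⟩ := mem_PnSub_iff.1 hx
  obtain ⟨A', B', C', hB', hC', rfl⟩ := mem_PnSub_iff.1 hy
  rw [superMul_fromBlocks, fromBlocks_smul, fromBlocks_mem_PnSub_iff]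
  simp only [transpose_smul, transpose_add, transpose_sub, transpose_mul, transpose_transpose,
    hB, hC, hB', hC', Matrix.neg_mul, Matrix.mul_neg, smul_neg, smul_add, smul_sub]
  refine ⟨?_, ?_, ?_⟩ <;> abel

end Pn

def skewSingle {R ι : Type*} [Ring R] [DecidableEq ι] (i j : ι) : Matrix ι ι R :=
  single i j 1 - single j i 1

section SkewSingle

variable {R ι : Type*} [Ring R] [DecidableEq ι]

lemma transpose_skewSingle (i j : ι) : (skewSingle i j : Matrix ι ι R)ᵀ = -skewSingle i j := by
  simp [skewSingle, transpose_single]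

lemma eq_zero_of_forall_skewSingle_mul_eq_zero [Fintype ι] [Nontrivial ι] {κ : Type*}
    {C : Matrix ι κ R} (h : ∀ i j : ι, i ≠ j → (skewSingle i j : Matrix ι ι R) * C = 0) :
    C = 0 := by
  ext j l
  obtain ⟨i, hi⟩ := exists_ne j
  have := congr_fun (congr_fun (h i j hi) i) l
  rwa [skewSingle, Matrix.sub_mul, Matrix.sub_apply, single_mul_apply_same, one_mul,
    single_mul_apply_of_ne (1 : R) j i i l hi C, sub_zero] at this

end SkewSingle

section Scalar

variable {F ι : Type*} [Field F] [Fintype ι] [DecidableEq ι]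

lemma mul_add_mul_eq_of_superMul_superMul (h2 : (2 : F) ≠ 0) {A D S : Matrix ι ι F}
    (h : superMul (fromBlocks A 0 0 D) (superMul (fromBlocks 0 S 0 0) (fromBlocks 0 0 1 0)) =
      (1 / 2 : F) •
        (superMul (superMul (fromBlocks A 0 0 D) (fromBlocks 0 S 0 0)) (fromBlocks 0 0 1 0) +
          superMul (fromBlocks 0 S 0 0) (superMul (fromBlocks A 0 0 D) (fromBlocks 0 0 1 0)))) :
    A * S + S * A = 2 • (S * D) := by
  simp only [superMul_fromBlocks, Matrix.mul_zero, Matrix.zero_mul, Matrix.mul_one,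
    Matrix.one_mul, add_zero, zero_add, sub_zero, fromBlocks_smul, fromBlocks_add] at h
  -- the top-left block reads `(AS + SA)/4 = (AS + SD + S(D + A))/8`
  have h₁₁ := (fromBlocks_inj.1 h).1
  simp only [Matrix.mul_smul, Matrix.smul_mul, Matrix.mul_add, smul_add] at h₁₁
  linear_combination (norm := skip) (8 : F) • h₁₁
  match_scalars <;> field_simp <;> ring

lemma apply_eq_of_mul_skewSingle_add_skewSingle_mul {A : Matrix ι ι F} {i j : ι} (hij : i ≠ j)
    (h : A * skewSingle i j + skewSingle i j * A = 2 • (skewSingle i j * Aᵀ)) :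
    A j i = 3 * A i j ∧ A i i = A j j := by
  have hii := congr_fun (congr_fun h i) i
  have hij' := congr_fun (congr_fun h i) j
  simp only [skewSingle, Matrix.mul_sub, Matrix.sub_mul, Matrix.add_apply, Matrix.sub_apply,
    ne_eq, hij, not_false_eq_true, mul_single_apply_of_ne, mul_single_apply_same, mul_one,
    zero_sub, single_mul_apply_same, one_mul, single_mul_apply_of_ne, sub_zero,
    Matrix.smul_apply, transpose_apply, nsmul_eq_mul, Nat.cast_ofNat, hij.symm] at hii hij'
  exact ⟨by linear_combination hii, by linear_combination hij'⟩

lemma exists_eq_smul_one_of_mul_skewSingle_add_skewSingle_mul (h2 : (2 : F) ≠ 0)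
    {A : Matrix ι ι F}
    (h : ∀ i j, i ≠ j →
      A * skewSingle i j + skewSingle i j * A = 2 • (skewSingle i j * Aᵀ)) :
    ∃ c : F, A = c • 1 := by
  have hoff : ∀ i j, i ≠ j → A i j = 0 := by
    intro i j hij
    have h₁ := (apply_eq_of_mul_skewSingle_add_skewSingle_mul hij (h i j hij)).1
    have h₂ := (apply_eq_of_mul_skewSingle_add_skewSingle_mul hij.symm (h j i hij.symm)).1
    have h₈ : (2 : F) ^ 3 * A i j = 0 := by linear_combination (-3 : F) * h₁ - h₂
    exact (mul_eq_zero.1 h₈).resolve_left (pow_ne_zero 3 h2)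
  rcases isEmpty_or_nonempty ι with hι | ⟨⟨i₀⟩⟩
  · exact ⟨0, Subsingleton.elim _ _⟩
  refine ⟨A i₀ i₀, ?_⟩
  ext i j
  rcases eq_or_ne i j with rfl | hij
  · rcases eq_or_ne i i₀ with rfl | hi
    · simp
    · simp [(apply_eq_of_mul_skewSingle_add_skewSingle_mul hi (h i i₀ hi)).2]
  · simp [hoff i j hij, hij]

end Scalar

/-- **1/2-derivations of the Jordan superalgebra `P(n)`.**
Let `F` be a field of characteristic not `2` and `n ≥ 2`.  Every
`1/2`-derivation `φ` of `P(n)` (with the super-symmetrized product `∘`)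
is of the form `φ x = α • x` for some `α ∈ F`.  (The `1/2`-derivation
property is stated via representatives: whenever `z ∈ P(n)` equals
`x ∘ y` as a matrix, `φ z = (1/2) • (φ x ∘ y + x ∘ φ y)`.) -/
theorem half_derivation_of_Pn
    {F : Type*} [Field F] (hchar : (2 : F) ≠ 0) (n : ℕ) (hn : 2 ≤ n)
    (φ : PnSub F n →ₗ[F] PnSub F n)
    (hφ : ∀ x y z : PnSub F n,
      (z : Matrix (Fin n ⊕ Fin n) (Fin n ⊕ Fin n) F)
          = superMul (x : Matrix (Fin n ⊕ Fin n) (Fin n ⊕ Fin n) F)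
              (y : Matrix (Fin n ⊕ Fin n) (Fin n ⊕ Fin n) F) →
      (φ z : Matrix (Fin n ⊕ Fin n) (Fin n ⊕ Fin n) F)
        = (1 / 2 : F) • (superMul (φ x : Matrix (Fin n ⊕ Fin n) (Fin n ⊕ Fin n) F)
              (y : Matrix (Fin n ⊕ Fin n) (Fin n ⊕ Fin n) F)
            + superMul (x : Matrix (Fin n ⊕ Fin n) (Fin n ⊕ Fin n) F)
              (φ y : Matrix (Fin n ⊕ Fin n) (Fin n ⊕ Fin n) F))) :
    ∃ α : F, ∀ x : PnSub F n, φ x = α • x := by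
  have hφ : IsHalfDerivation φ := hφ
  have : Nontrivial (Fin n) := Fin.nontrivial_iff_two_le.2 hn
  have h1 : (1 : Matrix (Fin n ⊕ Fin n) (Fin n ⊕ Fin n) F) ∈ PnSub F n := one_mem_PnSub
  have ht : fromBlocks 0 0 1 0 ∈ PnSub F n := fromBlocks_mem_PnSub_iff.2 (by simp)
  have hs (i j : Fin n) : fromBlocks 0 (skewSingle i j) 0 0 ∈ PnSub F n :=
    fromBlocks_mem_PnSub_iff.2 ⟨by simp, transpose_skewSingle i j, by simp⟩
  obtain ⟨A, B, C, -, -, hd⟩ := mem_PnSub_iff.1 (φ ⟨1, h1⟩).2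
  have hB : B = 0 := by
    simpa using mul_eq_mul_of_superMul_fromBlocks_comm hchar (hφ.superMul_comm hchar hd ht)
  have hC : C = 0 := eq_zero_of_forall_skewSingle_mul_eq_zero fun i j _ => by
    simpa using (mul_eq_mul_of_superMul_fromBlocks_comm hchar
      (hφ.superMul_comm hchar hd (hs i j))).symm
  subst hB hC
  obtain ⟨α, rfl⟩ : ∃ α : F, A = α • 1 :=
    exists_eq_smul_one_of_mul_skewSingle_add_skewSingle_mul hchar fun i j _ =>
      mul_add_mul_eq_of_superMul_superMul hchar
        (hφ.superMul_superMul hchar hd (hs i j) ht (superMul_mem_PnSub (hs i j) ht))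
  refine ⟨α, fun ⟨x, hx⟩ => Subtype.ext ?_⟩
  rw [hφ.coe_apply_eq_superMul_left hchar hd hx, transpose_smul, transpose_one, ← smul_zero α,
    ← fromBlocks_smul, fromBlocks_one, superMul_smul_left, superMul_one_left hchar,
    Submodule.coe_smul]
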